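/- Fix the order E < N < D. Define φ on bad Delannoy paths W in Del(n,n,l): let w_k be the first deepest step and W_1 = w_{k-r}...w_{k+s} the maximal window with w_{k-i}=D for 1≤i≤r, w_{k+j}=D for 1≤j≤s, w_{k-r-1}≠D, w_{k+s+1}≠D. If r ≥ 1, replace W_1 by D^{r-1} E D^{s+1}; if r = 0, replace W_1 by D^s E. Then φ(W) ∈ Del(n+1,n-1,l) and maj(W) = maj(φ(W)) + 1. -/

import Mathlib

inductive Step : Type
  | E | D | N
deriving DecidableEq

instance : Fintype Step :=
  ⟨{Step.E, Step.D, Step.N}, fun x => by cases x <;> simp⟩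

open Step Polynomial

/-- All words of length `l` over the step alphabet. -/
def Words (l : ℕ) : Finset (List Step) :=
  (Finset.univ : Finset (Fin l → Step)).image List.ofFn

/-- Delannoy paths from (0,0) to (m,n) with `l` steps, encoded as words:
`#E + #D = m`, `#N + #D = n`, length `l`. -/
def DelSet (m n l : ℕ) : Finset (List Step) :=
  (Words l).filter fun w => w.count E + w.count D = m ∧ w.count N + w.count D = n

/-- A word is bad if some prefix contains more N's than E's. -/
def bad (w : List Step) : Bool :=
  (List.range (w.length + 1)).any fun k => (w.take k).count E < (w.take k).count N

/-- Bad Delannoy paths from (0,0) to (n,n) with `l` steps. -/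
def BDelSet (n l : ℕ) : Finset (List Step) :=
  (DelSet n n l).filter fun w => bad w

/-- Schröder paths: Delannoy paths to (n,n) never going above the diagonal. -/
def SchSet (n l : ℕ) : Finset (List Step) :=
  (DelSet n n l).filter fun w => ¬ bad w

/-- Major index of a word w_1 ⋯ w_l with respect to a ranking of the letters:
the sum of all positions i (1 ≤ i ≤ l-1) with w_i > w_{i+1}. -/
def maj (rank : Step → ℕ) (w : List Step) : ℕ :=
  ∑ i ∈ Finset.range (w.length - 1),
    if rank (w.getD (i + 1) E) < rank (w.getD i E) then i + 1 else 0

/-- q-integer [m] = 1 + q + ⋯ + q^{m-1}. -/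
noncomputable def qint (m : ℕ) : Polynomial ℚ :=
  ∑ i ∈ Finset.range m, X ^ i

/-- q-factorial. -/
noncomputable def qfact : ℕ → Polynomial ℚ
  | 0 => 1
  | m + 1 => qfact m * qint (m + 1)

/-- Gaussian binomial coefficient, via the q-Pascal recurrence. -/
noncomputable def qbinom : ℕ → ℕ → Polynomial ℚ
  | _, 0 => 1
  | 0, _ + 1 => 0
  | m + 1, k + 1 => qbinom m k + X ^ (k + 1) * qbinom m (k + 1)

/-- q-trinomial coefficient [l]!/([a]![b]![c]!), defined when a+b+c = l. -/
noncomputable def qbinom3 (l a b c : ℕ) : Polynomial ℚ :=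
  if a + b + c = l then qbinom l a * qbinom (l - a) b else 0

/-- Depth after the first `i` steps: #N − #E. -/
def depth (w : List Step) (i : ℕ) : ℤ :=
  ((w.take i).count N : ℤ) - (w.take i).count E

/-- `k` (0 ≤ k ≤ l) achieves the maximal running depth. -/
def isMaxDepth (w : List Step) (k : ℕ) : Bool :=
  (List.range (w.length + 1)).all fun i => decide (depth w i ≤ depth w k)

/-- The first index (number of steps) at which the running depth is maximal. -/
def firstDeep (w : List Step) : ℕ :=
  (List.range (w.length + 1)).findIdx (isMaxDepth w)

/-- The last index at which the running depth is maximal. -/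
def lastDeep (w : List Step) : ℕ :=
  w.length - (List.range (w.length + 1)).reverse.findIdx (isMaxDepth w)

/-- Replace the first deepest step (the step w_k, k = firstDeep) with E. -/
def phi (w : List Step) : List Step := w.set (firstDeep w - 1) E

/-- Replace the step following the last deepest point with N. -/
def phiInv (w : List Step) : List Step := w.set (lastDeep w) N

/-- Number of consecutive D's immediately after the first deepest step. -/
def runS (w : List Step) : ℕ := ((w.drop (firstDeep w)).takeWhile (· == D)).length

/-- Number of consecutive D's immediately before the first deepest step. -/
def runR (w : List Step) : ℕ :=
  ((w.take (firstDeep w - 1)).reverse.takeWhile (· == D)).length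

/-- The window map: replace W₁ = D^r w_k D^s by D^{r-1} E D^{s+1} if r ≥ 1,
and by D^s E if r = 0. -/
def phiWin (w : List Step) : List Step :=
  let k := firstDeep w - 1
  let r := runR w
  let s := runS w
  let seg : List Step :=
    if 1 ≤ r then List.replicate (r - 1) D ++ [E] ++ List.replicate (s + 1) D
    else List.replicate s D ++ [E]
  w.take (k - r) ++ seg ++ w.drop (k + s + 1)

/-- 0-based index of the first step after which the path is above the diagonal. -/
def firstAbove (w : List Step) : ℕ :=
  (List.range w.length).findIdx fun i =>
    decide ((w.take (i + 1)).count E < (w.take (i + 1)).count N)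

/-- The map ψ of Bonin–Shapiro–Simion: replace with E the last N of the maximal
run of consecutive N's beginning at the first step going above the diagonal. -/
def psi (w : List Step) : List Step :=
  let i := firstAbove w
  let j := i + ((w.drop i).takeWhile (· == N)).length - 1
  w.set j E

/-!
Let `k` be the first step at which the depth reaches its maximum. For a bad path this maximum is
positive, so `w_k = N`; the run of `D`s after it must be followed by an `E` (the depth can neither
rise above the maximum nor stay there until the end, where it is `0`), and the run of `D`s before
it is preceded by an `N` or by nothing (after an `E` the maximum would be reached earlier). Hence
`W = A · D^r N D^s · E · B` with `A` empty or ending in `N`, and `φ(W) = A · W₁' · E · B` where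
`W₁'` has the letters of `W₁ = D^r N D^s` with its `N` replaced by an `E`, which moves the endpoint
from `(n, n)` to `(n + 1, n - 1)`.

For `E < N < D`, with `p = |A|`, the descents of `W` into the block `D^r N D^s E` are at `p + r`
(into `N`, when `r ≥ 1`) and at `p + r + s + 1` (into the final `E`). In `φ(W)` they are at
`p + r - 1` and `p + r + s + 1` when `r ≥ 1`, and at `p + s` instead of `p + s + 1` when `r = 0`;
all other descents are the same, so `maj` drops by exactly one.
-/

namespace Delannoy

lemma exists_eq_replicate_takeWhile_append {α : Type*} [DecidableEq α] (l : List α) (a : α) :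
    ∃ rest, l = List.replicate (l.takeWhile (· == a)).length a ++ rest ∧ rest.head? ≠ some a := by
  refine ⟨l.dropWhile (· == a), ?_, ?_⟩
  · conv_lhs => rw [← List.takeWhile_append_dropWhile (p := (· == a)) (l := l)]
    congr 1
    refine List.eq_replicate_iff.2 ⟨rfl, fun b hb => ?_⟩
    simpa using List.mem_takeWhile_imp hb
  · intro h
    have hne : l.dropWhile (· == a) ≠ [] := fun h' => by simp [h'] at h
    have := List.head_dropWhile_not (· == a) hne
    rw [List.head?_eq_some_head hne, Option.some_inj] at h
    simp [h] at this

lemma getLastD_replicate_self {α : Type*} (a : α) (m : ℕ) :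
    (List.replicate m a).getLastD a = a := by
  induction m with
  | zero => rfl
  | succ m ih => rw [List.replicate_succ, List.getLastD_cons, ih]

lemma mem_Words {l : ℕ} {x : List Step} : x ∈ Words l ↔ x.length = l := by
  refine ⟨?_, fun h => ?_⟩
  · simp only [Words, Finset.mem_image]
    rintro ⟨f, -, rfl⟩
    simp
  · subst h
    exact Finset.mem_image.2 ⟨x.get, Finset.mem_univ _, List.ofFn_get x⟩

lemma mem_DelSet_of_perm {w w' : List Step} {m n l : ℕ} (hw : w ∈ DelSet m n l)
    (h : (w' ++ [N]).Perm (w ++ [E])) : w' ∈ DelSet (m + 1) (n - 1) l := by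
  simp only [DelSet, Finset.mem_filter, mem_Words] at hw ⊢
  have hc : ∀ c, w'.count c + [N].count c = w.count c + [E].count c := by
    intro c; simpa [List.count_append] using h.count_eq c
  have hE := hc E
  have hN := hc N
  have hD := hc D
  have hlen := h.length_eq
  simp at hE hN hD hlen
  omega

section Maj

variable (rank : Step → ℕ)

/-- The descents of `a :: x` counted with their positions, the `i`-th letter of `x` (from `0`)
sitting at position `t + i`. -/
def majAfter : Step → ℕ → List Step → ℕ
  | _, _, [] => 0
  | a, t, b :: x => (if rank b < rank a then t else 0) + majAfter b (t + 1) x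

lemma majAfter_cons_eq_sum (x : List Step) : ∀ (a b : Step) (t : ℕ),
    majAfter rank a t (b :: x) = (if rank b < rank a then t else 0) +
      ∑ i ∈ Finset.range x.length,
        if rank ((b :: x).getD (i + 1) E) < rank ((b :: x).getD i E) then t + (i + 1) else 0 := by
  induction x with
  | nil => simp [majAfter]
  | cons c y ih =>
    intro a b t
    rw [majAfter, ih b c (t + 1), List.length_cons, Finset.sum_range_succ' _ y.length]
    simp only [List.getD_cons_succ, List.getD_cons_zero]
    ring_nf

-- The phantom letter `a` can only create a descent at position `0`.
lemma maj_eq_majAfter (a : Step) (w : List Step) : maj rank w = majAfter rank a 0 w := by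
  cases w with
  | nil => simp [maj, majAfter]
  | cons b x => simp [maj, majAfter_cons_eq_sum]

lemma majAfter_append (x y : List Step) : ∀ (a : Step) (t : ℕ),
    majAfter rank a t (x ++ y) =
      majAfter rank a t x + majAfter rank (x.getLastD a) (t + x.length) y := by
  induction x with
  | nil => simp [majAfter]
  | cons b x ih =>
    intro a t
    rw [List.cons_append, majAfter, majAfter, ih, List.getLastD_cons, List.length_cons]
    ring_nf

lemma maj_congr_of_lt_iff {rank' : Step → ℕ} (h : ∀ a b, rank a < rank b ↔ rank' a < rank' b)
    (w : List Step) : maj rank w = maj rank' w := by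
  simp only [maj, h]

end Maj

def rankEND : Step → ℕ
  | E => 0
  | N => 1
  | D => 2

lemma maj_eq_maj_rankEND {rank : Step → ℕ} (hEN : rank E < rank N) (hND : rank N < rank D)
    (w : List Step) : maj rank w = maj rankEND w :=
  maj_congr_of_lt_iff rank (by intro a b; cases a <;> cases b <;> simp [rankEND] <;> omega) w

lemma majAfter_rankEND_replicate_D (c : Step) (t m : ℕ) :
    majAfter rankEND c t (List.replicate m D) = 0 := by
  induction m generalizing c t with
  | zero => rfl
  | succ m ih => cases c <;> simp [List.replicate_succ, majAfter, rankEND, ih]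

def window (r s : ℕ) : List Step := List.replicate r D ++ N :: List.replicate s D

def windowImage (r s : ℕ) : List Step :=
  if 1 ≤ r then List.replicate (r - 1) D ++ [E] ++ List.replicate (s + 1) D
  else List.replicate s D ++ [E]

lemma length_windowImage (r s : ℕ) : (windowImage r s).length = (window r s).length := by
  unfold windowImage window; split_ifs <;> simp <;> omega

lemma perm_append_windowImage (A C : List Step) (r s : ℕ) :
    (A ++ windowImage r s ++ C ++ [N]).Perm (A ++ window r s ++ C ++ [E]) := by
  rw [List.perm_iff_count]
  intro c
  unfold windowImage window
  split_ifs <;> cases c <;> simp [List.count_replicate] <;> omega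

lemma majAfter_window (t r s : ℕ) :
    majAfter rankEND N t (window r s ++ [E]) =
      majAfter rankEND N t (windowImage r s ++ [E]) + 1 := by
  rcases r with _ | _ | r <;> rcases s with _ | s <;>
    simp [window, windowImage, majAfter_append, majAfter_rankEND_replicate_D, majAfter, rankEND,
      List.replicate_succ, getLastD_replicate_self, -List.getLastD_eq_getLast?] <;> omega

lemma maj_append_window {A : List Step} (hA : A.getLastD N = N) (r s : ℕ) (B : List Step) :
    maj rankEND (A ++ window r s ++ E :: B) = maj rankEND (A ++ windowImage r s ++ E :: B) + 1 := by
  have hsplit : ∀ X : List Step, maj rankEND (A ++ X ++ E :: B) = majAfter rankEND N 0 A +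
      majAfter rankEND N A.length (X ++ [E]) + majAfter rankEND E (A.length + X.length + 1) B := by
    intro X
    rw [maj_eq_majAfter _ N, show A ++ X ++ E :: B = A ++ (X ++ [E]) ++ B by simp, majAfter_append,
      majAfter_append, hA]
    simp [add_assoc]
  rw [hsplit, hsplit, majAfter_window, length_windowImage]
  ring

def height (x : List Step) : ℤ := (x.count N : ℤ) - x.count E

lemma depth_eq_height_take (w : List Step) (i : ℕ) : depth w i = height (w.take i) := rfl

@[simp] lemma height_nil : height [] = 0 := by simp [height]

lemma height_append (x y : List Step) : height (x ++ y) = height x + height y := by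
  simp only [height, List.count_append]; push_cast; ring

@[simp] lemma height_cons_E (x : List Step) : height (E :: x) = height x - 1 := by
  simp [height]; ring

@[simp] lemma height_cons_N (x : List Step) : height (N :: x) = height x + 1 := by
  simp [height]; ring

@[simp] lemma height_cons_D (x : List Step) : height (D :: x) = height x := by
  simp [height]

@[simp] lemma height_replicate_D (m : ℕ) : height (List.replicate m D) = 0 := by
  simp [height, List.count_replicate]

lemma eq_replicate_D_append_E_cons {v : List Step} (hle : ∀ x, x <+: v → height x ≤ 0)
    (hneg : height v < 0) : ∃ B, v = List.replicate (v.takeWhile (· == D)).length D ++ E :: B := by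
  obtain ⟨rest, hv, hhead⟩ := exists_eq_replicate_takeWhile_append v D
  generalize (v.takeWhile (· == D)).length = s at hv ⊢
  rcases rest with _ | ⟨c, B⟩
  · simp [hv] at hneg
  · refine ⟨B, ?_⟩
    cases c
    · exact hv
    · simp at hhead
    · have := hle (List.replicate s D ++ [N]) ⟨B, by simp [hv]⟩
      simp [height_append] at this

lemma exists_getLastD_eq_N_append_replicate_D {u : List Step}
    (hle : ∀ x, x <+: u → height x ≤ height u) :
    ∃ A, A.getLastD N = N ∧ u = A ++ List.replicate (u.reverse.takeWhile (· == D)).length D := by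
  obtain ⟨rest, hu, hhead⟩ := exists_eq_replicate_takeWhile_append u.reverse D
  generalize (u.reverse.takeWhile (· == D)).length = r at hu ⊢
  have hu' : u = rest.reverse ++ List.replicate r D := by
    rw [← List.reverse_reverse u, hu]; simp
  refine ⟨rest.reverse, ?_, hu'⟩
  rcases rest with _ | ⟨c, A⟩
  · rfl
  · cases c
    · have := hle A.reverse ⟨E :: List.replicate r D, by simp [hu']⟩
      simp [hu', height_append] at this
    · simp at hhead
    · simp

section FirstDeep

variable {w : List Step}

lemma isMaxDepth_iff {k : ℕ} : isMaxDepth w k = true ↔ ∀ i ≤ w.length, depth w i ≤ depth w k := by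
  simp [isMaxDepth]

lemma exists_isMaxDepth (w : List Step) :
    ∃ k ∈ List.range (w.length + 1), isMaxDepth w k = true := by
  obtain ⟨k, hk, hmax⟩ :=
    Finset.exists_max_image (Finset.range (w.length + 1)) (depth w) ⟨0, by simp⟩
  refine ⟨k, by simpa using hk, isMaxDepth_iff.2 fun i hi => hmax i (by simp; omega)⟩

lemma firstDeep_le_length : firstDeep w ≤ w.length := by
  have := List.findIdx_lt_length_of_exists (exists_isMaxDepth w)
  simp only [List.length_range] at this
  unfold firstDeep; omega

lemma depth_le_depth_firstDeep {i : ℕ} (hi : i ≤ w.length) :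
    depth w i ≤ depth w (firstDeep w) := by
  have h := @List.findIdx_getElem _ (isMaxDepth w) (List.range (w.length + 1))
    (List.findIdx_lt_length_of_exists (exists_isMaxDepth w))
  simp only [List.getElem_range] at h
  exact isMaxDepth_iff.1 h i hi

lemma depth_lt_depth_firstDeep {i : ℕ} (hi : i < firstDeep w) :
    depth w i < depth w (firstDeep w) := by
  have h := List.not_of_lt_findIdx hi
  simp only [List.getElem_range, ← Bool.not_eq_true, isMaxDepth_iff, not_forall, not_le] at h
  obtain ⟨j, hj, hlt⟩ := h
  exact hlt.trans_le (depth_le_depth_firstDeep hj)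

lemma height_le_of_prefix {x : List Step} (hx : x <+: w) :
    height x ≤ depth w (firstDeep w) := by
  rw [List.prefix_iff_eq_take.1 hx, ← depth_eq_height_take]
  exact depth_le_depth_firstDeep hx.length_le

lemma height_lt_of_prefix {x : List Step} (hx : x <+: w) (hlt : x.length < firstDeep w) :
    height x < depth w (firstDeep w) := by
  rw [List.prefix_iff_eq_take.1 hx, ← depth_eq_height_take]
  exact depth_lt_depth_firstDeep hlt

lemma exists_eq_append_N_cons (hbad : bad w = true) :
    ∃ u v, w = u ++ N :: v ∧ u.length + 1 = firstDeep w := by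
  obtain ⟨m, hm, hpos⟩ : ∃ m ≤ w.length, 0 < depth w m := by
    simp only [bad, List.any_eq_true, List.mem_range, decide_eq_true_eq] at hbad
    obtain ⟨m, hm, hlt⟩ := hbad
    exact ⟨m, by omega, by unfold depth; omega⟩
  have hmax_pos := hpos.trans_le (depth_le_depth_firstDeep hm)
  obtain ⟨k, hk⟩ : ∃ k, firstDeep w = k + 1 := by
    refine Nat.exists_eq_succ_of_ne_zero fun h => ?_
    simp [h, depth] at hmax_pos
  have hkL : k < w.length := by have := firstDeep_le_length (w := w); omega
  have htake := List.take_append_getElem hkL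
  have hstep := depth_lt_depth_firstDeep (w := w) (i := k) (by omega)
  rw [hk, depth_eq_height_take, depth_eq_height_take, ← htake, height_append] at hstep
  refine ⟨w.take k, w.drop (k + 1), ?_, by simp [hk]; omega⟩
  have hN : w[k] = N := by
    cases h : w[k] <;> simp [h] at hstep ⊢
  rw [← hN, ← List.singleton_append, ← List.append_assoc, htake, List.take_append_drop]

theorem exists_eq_append_window (hbad : bad w = true) (hbal : height w = 0) :
    ∃ A B, A.getLastD N = N ∧ A.length + runR w + 1 = firstDeep w ∧
      w = A ++ window (runR w) (runS w) ++ E :: B := by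
  obtain ⟨u, v, hw, hk⟩ := exists_eq_append_N_cons hbad
  have hdeep : depth w (firstDeep w) = height u + 1 := by
    rw [depth_eq_height_take, ← hk, hw, List.take_length_add_append]
    simp [height_append]
  have hr : runR w = (u.reverse.takeWhile (· == D)).length := by
    simp only [runR, ← hk]; rw [hw]; simp
  have hs : runS w = (v.takeWhile (· == D)).length := by
    simp only [runS, ← hk]; rw [hw]; simp
  have hleu : ∀ x, x <+: u → height x ≤ height u := fun x hx => by
    have := height_lt_of_prefix (hw ▸ hx.trans (List.prefix_append u _))
      (by have := hx.length_le; omega)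
    omega
  obtain ⟨A, hA, hu⟩ := exists_getLastD_eq_N_append_replicate_D hleu
  have hlev : ∀ x, x <+: v → height x ≤ 0 := fun x hx => by
    have := height_le_of_prefix
      (hw ▸ (List.prefix_append_right_inj u).2 (List.cons_prefix_cons.2 ⟨rfl, hx⟩))
    simp [height_append] at this
    omega
  have hneg : height v < 0 := by
    have := hleu [] (List.nil_prefix)
    rw [hw, height_append] at hbal
    simp at this hbal
    omega
  obtain ⟨B, hv⟩ := eq_replicate_D_append_E_cons hlev hneg
  rw [← hr] at hu
  rw [← hs] at hv
  refine ⟨A, B, hA, by rw [← hk, hu]; simp, ?_⟩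
  conv_lhs => rw [hw, hu, hv]
  simp [window]

lemma phiWin_eq_of_eq_append_window {A B : List Step}
    (hw : w = A ++ window (runR w) (runS w) ++ E :: B) (hk : A.length + runR w + 1 = firstDeep w) :
    phiWin w = A ++ windowImage (runR w) (runS w) ++ E :: B := by
  show w.take (firstDeep w - 1 - runR w) ++ windowImage (runR w) (runS w) ++
    w.drop (firstDeep w - 1 + runS w + 1) = _
  rw [show firstDeep w - 1 - runR w = A.length by omega,
    show firstDeep w - 1 + runS w + 1 = (A ++ window (runR w) (runS w)).length by
      simp [window]; omega]
  generalize runR w = r, runS w = s at hw ⊢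
  subst hw
  simp

end FirstDeep

end Delannoy

theorem phiWin_END_general (n l : ℕ)
    (rank : Step → ℕ)
    (hEN : rank E < rank N) (hND : rank N < rank D) :
    ∀ w ∈ BDelSet n l,
      phiWin w ∈ DelSet (n + 1) (n - 1) l ∧ maj rank w = maj rank (phiWin w) + 1 := by
  intro w hw
  obtain ⟨hdel, hbad⟩ := Finset.mem_filter.1 hw
  have hbal : Delannoy.height w = 0 := by
    simp only [DelSet, Finset.mem_filter] at hdel
    simp only [Delannoy.height]
    omega
  obtain ⟨A, B, hA, hk, hwA⟩ := Delannoy.exists_eq_append_window hbad hbal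
  rw [Delannoy.phiWin_eq_of_eq_append_window hwA hk, Delannoy.maj_eq_maj_rankEND hEN hND,
    Delannoy.maj_eq_maj_rankEND hEN hND]
  generalize runR w = r, runS w = s at hwA ⊢
  subst hwA
  exact ⟨Delannoy.mem_DelSet_of_perm hdel (Delannoy.perm_append_windowImage A _ r s),
    Delannoy.maj_append_window hA r s B⟩

/-- for the order E < N < D, the window map φ sends every bad path
in Del(n,n,l) into Del(n+1,n-1,l) with maj(W) = maj(φ(W)) + 1. -/
theorem phiWin_END (n l : ℕ) (hn : 1 ≤ n)
    (rank : Step → ℕ) (hrank : Function.Injective rank)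
    (hEN : rank E < rank N) (hND : rank N < rank D) :
    ∀ w ∈ BDelSet n l,
      phiWin w ∈ DelSet (n + 1) (n - 1) l ∧ maj rank w = maj rank (phiWin w) + 1 :=
  phiWin_END_general n l rank hEN hND
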